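/- For complex numbers b, c with c and c−b not nonpositive integers, and real t, x, y: e^{−tx} Φ₃(b; c; tx, ty) = H^{c−b}_c(t) H^{1/2}_{c−b}(y) [cosh(2√(ty)) e^{−tx}], where H^α_γ(u) multiplies the n-th coefficient in the Taylor expansion in u by (α)_n/(γ)_n, and cosh(2√u) = Σ_{k≥0} u^k/((1/2)_k k!). -/

import Mathlib

/-- The Pochhammer symbol `(a)_n = a(a+1)⋯(a+n-1)`. -/
noncomputable def poch (a : ℂ) (n : ℕ) : ℂ := Polynomial.eval a (ascPochhammer ℂ n)

/-- `z` is not a nonpositive integer. -/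
def NotNonposInt (z : ℂ) : Prop := ∀ m : ℕ, z ≠ -(m : ℂ)

/-- Horn's confluent function `Φ₃(b; c; x, y)`. -/
noncomputable def Phi3 (b c : ℂ) (x y : ℂ) : ℂ :=
  ∑' p : ℕ × ℕ,
    poch b p.1 / (poch c (p.1 + p.2) * (Nat.factorial p.1) * (Nat.factorial p.2)) *
      x ^ p.1 * y ^ p.2


lemma poch_zero (a : ℂ) : poch a 0 = 1 := by simp [poch]

lemma poch_succ (a : ℂ) (n : ℕ) : poch a (n+1) = poch a n * (a + n) := by
  simp [poch, ascPochhammer_succ_eval]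

lemma poch_succ_left (a : ℂ) (n : ℕ) : poch a (n+1) = a * poch (a+1) n := by
  simp [poch, ascPochhammer_succ_left, Polynomial.eval_comp, Polynomial.eval_mul]

lemma poch_add (a : ℂ) (m n : ℕ) : poch a (m+n) = poch a m * poch (a + m) n := by
  induction n with
  | zero => simp [poch_zero]
  | succ n ih => rw [← add_assoc, poch_succ, ih, poch_succ]; push_cast; ring

open Finset in
lemma chu (m : ℕ) : ∀ b γ : ℂ,
    ∑ j ∈ range (m+1), (-1:ℂ)^j * (m.choose j) * poch b j * poch (γ + j) (m - j)
      = poch (γ - b) m := by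
  induction m with
  | zero => intro b γ; simp [poch_zero]
  | succ m ih =>
    intro b γ
    have split : ∀ j ∈ range (m+2),
        (-1:ℂ)^j * ((m+1).choose j) * poch b j * poch (γ + j) (m+1 - j)
        = (-1:ℂ)^j * (m.choose j) * poch b j * poch (γ + j) (m+1-j)
          + (-1:ℂ)^j * (if j = 0 then (0:ℂ) else (m.choose (j-1) : ℂ)) * poch b j
            * poch (γ + j) (m+1-j) := by
      intro j _
      rcases j with _ | j
      · simp
      · rw [if_neg (Nat.succ_ne_zero j), Nat.choose_succ_succ']
        push_cast
        ring
    rw [Finset.sum_congr rfl split, Finset.sum_add_distrib]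
    have hF : ∑ j ∈ range (m+2), (-1:ℂ)^j * (m.choose j) * poch b j * poch (γ + j) (m+1-j)
        = poch (γ - b) m * (γ + m) := by
      rw [Finset.sum_range_succ, Nat.choose_succ_self]
      have e1 : ∀ j ∈ range (m+1),
          (-1:ℂ)^j * (m.choose j) * poch b j * poch (γ + j) (m+1-j)
          = ((-1:ℂ)^j * (m.choose j) * poch b j * poch (γ + j) (m-j)) * (γ + m) := by
        intro j hj
        rw [mem_range] at hj
        have hjm : j ≤ m := Nat.lt_succ_iff.mp hj
        have : m + 1 - j = (m - j) + 1 := by omega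
        rw [this, poch_succ]
        have : (γ + (j:ℂ)) + ((m - j : ℕ) : ℂ) = γ + m := by
          push_cast [Nat.cast_sub hjm]; ring
        rw [this]; ring
      rw [Finset.sum_congr rfl e1, ← Finset.sum_mul, ih]
      simp
    have hT : ∑ j ∈ range (m+2), (-1:ℂ)^j * (if j = 0 then (0:ℂ) else (m.choose (j-1) : ℂ))
          * poch b j * poch (γ + j) (m+1-j)
        = -(b * poch (γ - b) m) := by
      rw [Finset.sum_range_succ']
      have e2 : ∀ j ∈ range (m+1),
          (-1:ℂ)^(j+1) * (if j + 1 = 0 then (0:ℂ) else (m.choose (j+1-1) : ℂ))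
            * poch b (j+1) * poch (γ + (j+1:ℕ)) (m+1-(j+1))
          = -b * ((-1:ℂ)^j * (m.choose j) * poch (b+1) j * poch ((γ+1) + j) (m-j)) := by
        intro j hj
        rw [if_neg (Nat.succ_ne_zero j)]
        simp only [Nat.add_sub_cancel, Nat.succ_sub_succ, Nat.sub_zero]
        rw [poch_succ_left]
        have harg : γ + ((j+1 : ℕ) : ℂ) = (γ + 1) + j := by push_cast; ring
        rw [harg]
        ring
      rw [Finset.sum_congr rfl e2, ← Finset.mul_sum]
      have := ih (b+1) (γ+1)
      rw [show (γ+1) - (b+1) = γ - b by ring] at this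
      rw [this]
      simp
    rw [hF, hT, poch_succ]
    ring



lemma add_ne_zero_of_notNonposInt {a : ℂ} (h : NotNonposInt a) (n : ℕ) : a + n ≠ 0 := by
  intro hz
  exact h n (by linear_combination hz)

lemma poch_ne_zero {a : ℂ} (h : NotNonposInt a) (n : ℕ) : poch a n ≠ 0 := by
  induction n with
  | zero => simp [poch_zero]
  | succ n ih => rw [poch_succ]; exact mul_ne_zero ih (add_ne_zero_of_notNonposInt h n)

lemma exists_eps {a : ℂ} (h : NotNonposInt a) :
    ∃ ε : ℝ, 0 < ε ∧ ∀ n : ℕ, ε * (n+1) ≤ ‖a + n‖ := by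
  set N := 2 * ⌈‖a‖⌉₊ + 2 with hN
  have hne : ((Finset.range N).image (fun n : ℕ => ‖a + n‖ / (n+1))).Nonempty := by
    simp [hN]
  set ε₁ := ((Finset.range N).image (fun n : ℕ => ‖a + n‖ / (n+1))).min' hne with hε₁
  have hε₁pos : 0 < ε₁ := by
    obtain ⟨n, _, hn⟩ := Finset.mem_image.mp (Finset.min'_mem _ hne)
    rw [hε₁, ← hn]
    exact div_pos (norm_pos_iff.mpr (add_ne_zero_of_notNonposInt h n)) (by positivity)
  refine ⟨min ε₁ (1/2), by positivity, fun n => ?_⟩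
  rcases lt_or_ge n N with hn | hn
  · have hmem : ‖a + n‖ / (n+1) ∈ (Finset.range N).image (fun n : ℕ => ‖a + n‖ / (n+1)) :=
      Finset.mem_image_of_mem _ (Finset.mem_range.mpr hn)
    have := Finset.min'_le _ _ hmem
    calc min ε₁ (1/2) * (n+1) ≤ (‖a + n‖ / (n+1)) * (n+1) := by
          apply mul_le_mul_of_nonneg_right (le_trans (min_le_left _ _) this) (by positivity)
      _ = ‖a + n‖ := by field_simp
  · have h1 : (‖a‖ : ℝ) ≤ (n - 1) / 2 := by
      have : (⌈‖a‖⌉₊ : ℝ) ≥ ‖a‖ := Nat.le_ceil _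
      have hn' : (n : ℝ) ≥ 2 * ⌈‖a‖⌉₊ + 2 := by exact_mod_cast hn
      linarith
    have h2 : (n : ℝ) - ‖a‖ ≤ ‖a + n‖ := by
      have h3 : ‖(n:ℂ)‖ ≤ ‖a + n‖ + ‖a‖ := by
        simpa using norm_sub_le ((a:ℂ) + n) a
      rw [Complex.norm_natCast] at h3
      linarith
    calc min ε₁ (1/2) * (n+1) ≤ (1/2) * (n+1) := by
          apply mul_le_mul_of_nonneg_right (min_le_right _ _) (by positivity)
      _ ≤ (n : ℝ) - ‖a‖ := by linarith
      _ ≤ ‖a + n‖ := h2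

lemma poch_norm_lower {a : ℂ} {ε : ℝ} (hε : ∀ n : ℕ, ε * (n+1) ≤ ‖a + n‖) (hεpos : 0 < ε)
    (n : ℕ) : ε ^ n * n.factorial ≤ ‖poch a n‖ := by
  induction n with
  | zero => simp [poch_zero]
  | succ n ih =>
    rw [poch_succ, norm_mul]
    calc ε ^ (n+1) * (n+1).factorial = (ε ^ n * n.factorial) * (ε * (n+1)) := by
          push_cast [Nat.factorial_succ]; ring
      _ ≤ ‖poch a n‖ * ‖a + n‖ := by
          apply mul_le_mul ih (hε n) (by positivity) (norm_nonneg _)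

lemma poch_norm_upper (a : ℂ) (n : ℕ) : ‖poch a n‖ ≤ (‖a‖+1) ^ n * n.factorial := by
  induction n with
  | zero => simp [poch_zero]
  | succ n ih =>
    rw [poch_succ, norm_mul]
    calc ‖poch a n‖ * ‖a + n‖ ≤ ((‖a‖+1) ^ n * n.factorial) * ((‖a‖+1) * (n+1)) := by
          apply mul_le_mul ih ?_ (norm_nonneg _) (by positivity)
          calc ‖a + (n:ℂ)‖ ≤ ‖a‖ + n := by
                simpa [Complex.norm_natCast] using norm_add_le a (n : ℂ)
            _ ≤ (‖a‖+1) * (n+1) := by nlinarith [norm_nonneg a]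
      _ = (‖a‖+1) ^ (n+1) * (n+1).factorial := by push_cast [Nat.factorial_succ]; ring

open Finset in
lemma coef (b c : ℂ) (hc : NotNonposInt c) (hcb : NotNonposInt (c - b)) (u v : ℂ)
    (m k : ℕ) :
    ∑ kl ∈ Finset.HasAntidiagonal.antidiagonal m,
      ((-u)^kl.1 / kl.1.factorial) *
        (poch b kl.2 / (poch c (kl.2+k) * kl.2.factorial * k.factorial) * u^kl.2 * v^k)
      = poch (c-b) (m+k) / (poch c (m+k) * poch (c-b) k) * (-u)^m * v^k
          / (m.factorial * k.factorial) := by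
  rw [← Finset.Nat.sum_antidiagonal_swap, Finset.Nat.sum_antidiagonal_eq_sum_range_succ_mk]
  simp only [Prod.fst_swap, Prod.snd_swap, Prod.swap_prod_mk, Nat.succ_eq_add_one]
  have key : ∀ j ∈ range (m+1),
      ((-u)^(m-j) / ((m-j).factorial : ℂ)) *
        (poch b j / (poch c (j+k) * j.factorial * k.factorial) * u^j * v^k)
      = ((-1:ℂ)^m * u^m * v^k / (poch c (m+k) * m.factorial * k.factorial)) *
          ((-1:ℂ)^j * (m.choose j) * poch b j * poch ((c + k) + j) (m - j)) := by
    intro j hj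
    rw [mem_range, Nat.lt_succ_iff] at hj
    have hsgn : (-1:ℂ)^(m-j) * (-1:ℂ)^j = (-1:ℂ)^m := by
      rw [← pow_add, Nat.sub_add_cancel hj]
    have hu : u^(m-j) * u^j = u^m := by rw [← pow_add, Nat.sub_add_cancel hj]
    have hfac : ((m.choose j : ℂ)) * (j.factorial) * ((m-j).factorial) = m.factorial := by
      exact_mod_cast congrArg (Nat.cast : ℕ → ℂ) (Nat.choose_mul_factorial_mul_factorial hj)
    have hpoch : poch c (m+k) = poch c (j+k) * poch ((c + k) + j) (m - j) := by
      have h : m + k = (j + k) + (m - j) := by omega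
      rw [h, poch_add]
      congr 2
      push_cast
      ring
    have h1 : poch c (j+k) ≠ 0 := poch_ne_zero hc _
    have h3 : ((m-j).factorial : ℂ) ≠ 0 := by exact_mod_cast (m-j).factorial_ne_zero
    have h4 : (j.factorial : ℂ) ≠ 0 := by exact_mod_cast j.factorial_ne_zero
    have h5 : (k.factorial : ℂ) ≠ 0 := by exact_mod_cast k.factorial_ne_zero
    have hsq : (-1:ℂ)^j * (-1)^j = 1 := by
      rw [← pow_add, ← two_mul, pow_mul]; norm_num
    have hsgn2 : (-1:ℂ)^(m-j) = (-1)^m * (-1)^j := by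
      rw [← hsgn, mul_assoc, hsq, mul_one]
    rw [neg_pow u (m-j), hpoch, ← hfac, ← hu, hsgn2]
    have hch : ((m.choose j : ℕ) : ℂ) ≠ 0 := by exact_mod_cast (Nat.choose_pos hj).ne'
    have h8 : poch ((c + k) + j) (m - j) ≠ 0 := by
      apply poch_ne_zero
      intro i hi
      apply hc (k + j + i)
      push_cast at hi ⊢
      linear_combination hi
    field_simp
  rw [Finset.sum_congr rfl key, ← Finset.mul_sum, chu]
  have hsplit : poch (c - b) (m+k) = poch (c-b) k * poch ((c + k) - b) m := by
    rw [add_comm m k, poch_add]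
    congr 1
    ring
  have h2 : poch c (m+k) ≠ 0 := poch_ne_zero hc _
  have h5 : (k.factorial : ℂ) ≠ 0 := by exact_mod_cast k.factorial_ne_zero
  have h6 : (m.factorial : ℂ) ≠ 0 := by exact_mod_cast m.factorial_ne_zero
  have h7 : poch (c-b) k ≠ 0 := poch_ne_zero hcb _
  rw [hsplit, neg_pow u m]
  field_simp

lemma fact_mul_fact_le (j k : ℕ) : (j.factorial * k.factorial : ℝ) ≤ ((j+k).factorial : ℝ) := by
  exact_mod_cast Nat.le_of_dvd (Nat.factorial_pos _)
    (Nat.factorial_mul_factorial_dvd_factorial_add j k)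

lemma bound_a (b c : ℂ) {ε : ℝ} (hεpos : 0 < ε) (hε : ∀ n : ℕ, ε*(n+1) ≤ ‖c+n‖)
    (u v : ℂ) (j k : ℕ) :
    ‖poch b j / (poch c (j+k) * (j.factorial:ℂ) * (k.factorial:ℂ)) * u^j * v^k‖
      ≤ ((‖b‖+1)*‖u‖/ε)^j / j.factorial * ((‖v‖/ε)^k / k.factorial) := by
  have hden1 : ε^(j+k) * ((j+k).factorial : ℝ) ≤ ‖poch c (j+k)‖ := poch_norm_lower hε hεpos _
  have hfle := fact_mul_fact_le j k
  have hjpos : (0:ℝ) < j.factorial := by exact_mod_cast j.factorial_pos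
  have hkpos : (0:ℝ) < k.factorial := by exact_mod_cast k.factorial_pos
  have hnorm : ‖poch b j / (poch c (j+k) * (j.factorial:ℂ) * (k.factorial:ℂ)) * u^j * v^k‖
      = ‖poch b j‖ / (‖poch c (j+k)‖ * j.factorial * k.factorial) * ‖u‖^j * ‖v‖^k := by
    simp [norm_mul, norm_div, norm_pow, Complex.norm_natCast]
  rw [hnorm]
  calc ‖poch b j‖ / (‖poch c (j+k)‖ * j.factorial * k.factorial) * ‖u‖^j * ‖v‖^k
      ≤ ((‖b‖+1)^j * j.factorial) / ((ε^(j+k) * (j.factorial * k.factorial))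
          * j.factorial * k.factorial) * ‖u‖^j * ‖v‖^k := by
        gcongr
        · exact poch_norm_upper b j
        · calc ε^(j+k) * ((j.factorial : ℝ) * k.factorial) ≤ ε^(j+k) * ((j+k).factorial : ℝ) := by
                gcongr
            _ ≤ ‖poch c (j+k)‖ := hden1
    _ = (((‖b‖+1)*‖u‖/ε)^j / j.factorial * ((‖v‖/ε)^k / k.factorial)) * (1/k.factorial) := by
        simp only [pow_add, div_pow, mul_pow]
        field_simp
    _ ≤ _ := by
        apply mul_le_of_le_one_right (by positivity)
        rw [div_le_one hkpos]
        exact_mod_cast Nat.one_le_iff_ne_zero.mpr k.factorial_ne_zero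

lemma bound_R (b c : ℂ) {ε ε' : ℝ} (hεpos : 0 < ε) (hε : ∀ n : ℕ, ε*(n+1) ≤ ‖c+n‖)
    (hε'pos : 0 < ε') (hε' : ∀ n : ℕ, ε'*(n+1) ≤ ‖(c-b)+n‖)
    (u v : ℂ) (m k : ℕ) :
    ‖poch (c-b) (m+k) / (poch c (m+k) * poch (c-b) k) * (-u)^m * v^k
        / ((m.factorial:ℂ) * (k.factorial:ℂ))‖
      ≤ ((‖c-b‖+1)*‖u‖/ε)^m / m.factorial * (((‖c-b‖+1)*‖v‖/(ε*ε'))^k / k.factorial) := by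
  have hden1 : ε^(m+k) * ((m+k).factorial : ℝ) ≤ ‖poch c (m+k)‖ := poch_norm_lower hε hεpos _
  have hden2 : ε'^k * (k.factorial : ℝ) ≤ ‖poch (c-b) k‖ := poch_norm_lower hε' hε'pos _
  have hup : ‖poch (c-b) (m+k)‖ ≤ (‖c-b‖+1)^(m+k) * (m+k).factorial := poch_norm_upper _ _
  have hmpos : (0:ℝ) < m.factorial := by exact_mod_cast m.factorial_pos
  have hkpos : (0:ℝ) < k.factorial := by exact_mod_cast k.factorial_pos
  have hmkpos : (0:ℝ) < (m+k).factorial := by exact_mod_cast (m+k).factorial_pos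
  have hnorm : ‖poch (c-b) (m+k) / (poch c (m+k) * poch (c-b) k) * (-u)^m * v^k
        / ((m.factorial:ℂ) * (k.factorial:ℂ))‖
      = ‖poch (c-b) (m+k)‖ / (‖poch c (m+k)‖ * ‖poch (c-b) k‖) * ‖u‖^m * ‖v‖^k
          / (m.factorial * k.factorial) := by
    simp [norm_mul, norm_div, norm_pow, Complex.norm_natCast]
  rw [hnorm]
  calc ‖poch (c-b) (m+k)‖ / (‖poch c (m+k)‖ * ‖poch (c-b) k‖) * ‖u‖^m * ‖v‖^k
          / (m.factorial * k.factorial)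
      ≤ ((‖c-b‖+1)^(m+k) * (m+k).factorial)
          / ((ε^(m+k) * ((m+k).factorial : ℝ)) * (ε'^k * (k.factorial : ℝ))) * ‖u‖^m * ‖v‖^k
          / (m.factorial * k.factorial) := by
        gcongr ?_ / (?_ * ?_) * _ * _ / _ <;>
          first | exact hup | exact hden1 | exact hden2 | positivity
    _ = (((‖c-b‖+1)*‖u‖/ε)^m / m.factorial * (((‖c-b‖+1)*‖v‖/(ε*ε'))^k / k.factorial))
          * (1/k.factorial) := by
        simp only [pow_add, div_pow, mul_pow]
        field_simp
    _ ≤ _ := by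
        apply mul_le_of_le_one_right (by positivity)
        rw [div_le_one hkpos]
        exact_mod_cast Nat.one_le_iff_ne_zero.mpr k.factorial_ne_zero

set_option maxHeartbeats 1000000 in
theorem Phi3_repr' (b c : ℂ) (hc : NotNonposInt c) (hcb : NotNonposInt (c - b))
    (u v : ℂ) :
    Complex.exp (-u) * Phi3 b c u v =
      ∑' p : ℕ × ℕ,
        poch (c - b) (p.1 + p.2) / (poch c (p.1 + p.2) * poch (c - b) p.2) *
          (-u) ^ p.1 * v ^ p.2 /
          ((Nat.factorial p.1) * (Nat.factorial p.2)) := by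
  obtain ⟨ε, hεpos, hε⟩ := exists_eps hc
  obtain ⟨ε', hε'pos, hε'⟩ := exists_eps hcb
  set A : ℕ × ℕ → ℂ := fun p =>
    poch b p.1 / (poch c (p.1 + p.2) * (Nat.factorial p.1) * (Nat.factorial p.2)) *
      u ^ p.1 * v ^ p.2 with hA
  set R : ℕ × ℕ → ℂ := fun p =>
    poch (c - b) (p.1 + p.2) / (poch c (p.1 + p.2) * poch (c - b) p.2) *
      (-u) ^ p.1 * v ^ p.2 / ((Nat.factorial p.1) * (Nat.factorial p.2)) with hR
  have hboundA : ∀ p : ℕ × ℕ,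
      ‖A p‖ ≤ ((‖b‖+1)*‖u‖/ε)^p.1 / p.1.factorial * ((‖v‖/ε)^p.2 / p.2.factorial) :=
    fun p => bound_a b c hεpos hε u v p.1 p.2
  have hboundR : ∀ p : ℕ × ℕ,
      ‖R p‖ ≤ ((‖c-b‖+1)*‖u‖/ε)^p.1 / p.1.factorial
          * (((‖c-b‖+1)*‖v‖/(ε*ε'))^p.2 / p.2.factorial) :=
    fun p => bound_R b c hεpos hε hε'pos hε' u v p.1 p.2
  have hsummaj : ∀ (Ca Cb : ℝ), 0 ≤ Ca → 0 ≤ Cb → Summable fun p : ℕ × ℕ =>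
      Ca^p.1 / p.1.factorial * (Cb^p.2 / p.2.factorial) := fun Ca Cb hCa hCb =>
    Summable.mul_of_nonneg (Real.summable_pow_div_factorial Ca)
      (Real.summable_pow_div_factorial Cb) (fun n => by positivity) (fun n => by positivity)
  have hbA : ∀ (j k : ℕ),
      ‖A (j,k)‖ ≤ ((‖b‖+1)*‖u‖/ε)^j / j.factorial * ((‖v‖/ε)^k / k.factorial) :=
    fun j k => hboundA (j,k)
  have hbR : ∀ (m k : ℕ),
      ‖R (m,k)‖ ≤ ((‖c-b‖+1)*‖u‖/ε)^m / m.factorial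
          * (((‖c-b‖+1)*‖v‖/(ε*ε'))^k / k.factorial) :=
    fun m k => hboundR (m,k)
  have hsumAnorm : Summable (fun p => ‖A p‖) :=
    (hsummaj _ _ (by positivity) (by positivity)).of_nonneg_of_le
      (fun _ => norm_nonneg _) hboundA
  have hsumA : Summable A := hsumAnorm.of_norm
  have hsumRnorm : Summable (fun p => ‖R p‖) :=
    (hsummaj _ _ (by positivity) (by positivity)).of_nonneg_of_le
      (fun _ => norm_nonneg _) hboundR
  have hsumR : Summable R := hsumRnorm.of_norm
  have hAk : ∀ k, Summable fun j => ‖A (j, k)‖ := by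
    intro k
    apply Summable.of_nonneg_of_le (fun _ => norm_nonneg _) (fun j => hbA j k)
    exact (Real.summable_pow_div_factorial _).mul_right _
  have hAk' : ∀ k, Summable fun j => A (j, k) := fun k => (hAk k).of_norm
  have hRk : ∀ k, Summable fun m => R (m, k) := by
    intro k
    apply Summable.of_norm
    apply Summable.of_nonneg_of_le (fun _ => norm_nonneg _) (fun m => hbR m k)
    exact (Real.summable_pow_div_factorial _).mul_right _
  have hE : Summable fun i : ℕ => ‖(-u)^i / (i.factorial : ℂ)‖ := by
    have heq : (fun i : ℕ => ‖(-u)^i / (i.factorial : ℂ)‖)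
        = fun i : ℕ => ‖u‖^i / i.factorial := by
      funext i
      rw [norm_div, norm_pow, norm_neg, Complex.norm_natCast]
    rw [heq]
    exact Real.summable_pow_div_factorial _
  have hexp : Complex.exp (-u) = ∑' i : ℕ, (-u)^i / (i.factorial : ℂ) := by
    rw [Complex.exp_eq_exp_ℂ, NormedSpace.exp_eq_tsum_div]
  have e1 : ∑' p : ℕ × ℕ, A p = ∑' (k : ℕ), ∑' (j : ℕ), A (j, k) := by
    rw [← (Equiv.prodComm ℕ ℕ).tsum_eq A]
    exact Summable.tsum_prod' (hsumA.prod_symm) (fun k => hAk' k)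
  have e3 : ∑' p : ℕ × ℕ, R p = ∑' (k : ℕ), ∑' (m : ℕ), R (m, k) := by
    rw [← (Equiv.prodComm ℕ ℕ).tsum_eq R]
    exact Summable.tsum_prod' (hsumR.prod_symm) (fun k => hRk k)
  calc Complex.exp (-u) * Phi3 b c u v
      = Complex.exp (-u) * ∑' p : ℕ × ℕ, A p := by simp only [Phi3, hA]
    _ = Complex.exp (-u) * ∑' (k : ℕ), ∑' (j : ℕ), A (j, k) := by rw [e1]
    _ = ∑' (k : ℕ), Complex.exp (-u) * ∑' (j : ℕ), A (j, k) := by rw [tsum_mul_left]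
    _ = ∑' (k : ℕ), ∑' (m : ℕ), R (m, k) := by
        apply tsum_congr
        intro k
        rw [hexp, tsum_mul_tsum_eq_tsum_sum_antidiagonal_of_summable_norm hE (hAk k)]
        apply tsum_congr
        intro m
        simp only [hA, hR]
        exact coef b c hc hcb u v m k
    _ = ∑' p : ℕ × ℕ, R p := e3.symm

/-- Representation of `e^{-tx} Φ₃(b;c;tx,ty)` as the result of applying the
hypergeometrizations `H^{c-b}_c(t)` and `H^{1/2}_{c-b}(y)` to the double power series of
`cosh(2√(ty)) e^{-tx} = Σ_{j,k} (-tx)^j (ty)^k /((1/2)_k k! j!)`: applying the operators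
multiplies the `(j,k)` coefficient by `(c-b)_{j+k}/(c)_{j+k} · (1/2)_k/(c-b)_k`. -/
theorem Phi3_repr (b c : ℂ) (hc : NotNonposInt c) (hcb : NotNonposInt (c - b))
    (t x y : ℝ) :
    Complex.exp (-((t : ℂ) * x)) * Phi3 b c ((t : ℂ) * x) ((t : ℂ) * y) =
      ∑' p : ℕ × ℕ,
        poch (c - b) (p.1 + p.2) / (poch c (p.1 + p.2) * poch (c - b) p.2) *
          (-((t : ℂ) * x)) ^ p.1 * ((t : ℂ) * y) ^ p.2 /
          ((Nat.factorial p.1) * (Nat.factorial p.2)) :=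
  Phi3_repr' b c hc hcb ((t : ℂ) * x) ((t : ℂ) * y)
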